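/- Consider a parallel-edge network with finite nonempty edge set E, each edge e from s to t with transit time τ_e > 0 and capacity ν_e > 0, a finite player set P with supply rates d_j > 0, and time horizon H > 0, where players receive the information (θ, T(θ)) consisting of the current time and current exit times. Let every player use the strategy ḡ given by: ḡ_{e,j}(θ, T) = ν_e / ∑_{e'∈E'(T)} ν_{e'} if e ∈ E'(T); ḡ_{e,j}(θ, T) = 0 if E'(T) ≠ ∅ and e ∉ E'(T); and ḡ_{e,j}(θ, T) = ν_e / ∑_{e'∈E} ν_{e'} if E'(T) = ∅, where E'(T) = {e ∈ E : T_e < H}. Then in the induced feasible flow over time, the payoff of each player j equals her proportional share of the system optimum: ρ_j = Opt · d_j / (∑_{j'∈P} d_{j'}). -/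

import Mathlib

/-! Since all players follow the same strategy, fair merging splits the outflow of every edge
among the players in proportion to their supplies, so each payoff is the share `d j / ∑ d` of
the total arrival. For every feasible flow and every `t ∈ [0, H]` the total arrival is at most
the cut capacity `(∑ d) t + ∑ₑ νₑ (H - t - τₑ)⁺`: flow leaving edge `e` by time `H` entered it by
time `t` or left it after `t + τₑ` at rate at most `νₑ`. Under `ḡ`, let `t*` be the first time
at which the capacity of the active edges drops below `∑ d`. Before `t*` no queue builds up and
inactive edges receive nothing; after `t*` every edge that can still deliver by `H` runs at
capacity. So the induced flow attains the cut capacity at `t*`, which therefore equals `Opt`. -/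

open MeasureTheory

/-- A flow over time on a parallel-edge network with edge set `E` (edges from `s` to `t`,
with transit times `τ` and capacities `ν`), player set `P` with supply rates `d`, and time
horizon `H`: a family of nonnegative Lebesgue-integrable in- and outflow rate functions
(extended by `0` outside the time horizon) satisfying flow conservation
`∑ e, f⁺ e j θ = d j`. -/
structure FlowOverTime (E P : Type) [Fintype E] [Fintype P]
    (τ ν : E → ℝ) (d : P → ℝ) (H : ℝ) where
  /-- inflow rates `f⁺_{e,j}` -/
  fin : E → P → ℝ → ℝ
  /-- outflow rates `f⁻_{e,j}` -/
  fout : E → P → ℝ → ℝ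
  fin_nonneg : ∀ e j θ, 0 ≤ fin e j θ
  fout_nonneg : ∀ e j θ, 0 ≤ fout e j θ
  fin_supp : ∀ e j θ, θ ∉ Set.Ico (0 : ℝ) H → fin e j θ = 0
  fout_supp : ∀ e j θ, θ ∉ Set.Ico (τ e) H → fout e j θ = 0
  fin_integrable : ∀ e j, Integrable (fin e j)
  fout_integrable : ∀ e j, Integrable (fout e j)
  conservation : ∀ j θ, θ ∈ Set.Ico (0 : ℝ) H → ∑ e, fin e j θ = d j

namespace FlowOverTime

variable {E P : Type} [Fintype E] [Fintype P] {τ ν : E → ℝ} {d : P → ℝ} {H : ℝ}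

/-- Cumulative inflow `F⁺_{e,j}(θ) = ∫₀^θ f⁺_{e,j}`. -/
noncomputable def Fplus (f : FlowOverTime E P τ ν d H) (e : E) (j : P) (θ : ℝ) : ℝ :=
  ∫ t in (0:ℝ)..θ, f.fin e j t

/-- Cumulative outflow `F⁻_{e,j}(θ) = ∫₀^θ f⁻_{e,j}`. -/
noncomputable def Fminus (f : FlowOverTime E P τ ν d H) (e : E) (j : P) (θ : ℝ) : ℝ :=
  ∫ t in (0:ℝ)..θ, f.fout e j t

/-- Queue length `z_e(θ) = ∑_j F⁺_{e,j}(θ) − ∑_j F⁻_{e,j}(θ + τ_e)`. -/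
noncomputable def queue (f : FlowOverTime E P τ ν d H) (e : E) (θ : ℝ) : ℝ :=
  ∑ j, f.Fplus e j θ - ∑ j, f.Fminus e j (θ + τ e)

/-- Exit time `T_e(θ) = θ + z_e(θ)/ν_e + τ_e`. -/
noncomputable def exitTime (f : FlowOverTime E P τ ν d H) (e : E) (θ : ℝ) : ℝ :=
  θ + f.queue e θ / ν e + τ e

open Classical in
/-- Feasibility of a flow over time: non-deficit constraints, the deterministic queuing
condition (edges operate at capacity while the queue is nonempty), and fair merging of
the players' flows (a player's share of the outflow at time `θ` equals her share of the
inflow at time `φ = max T_e⁻¹(θ)`). -/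
def Feasible (f : FlowOverTime E P τ ν d H) : Prop :=
  (∀ e j θ, θ ∈ Set.Ico (0:ℝ) (H - τ e) → f.Fminus e j (θ + τ e) ≤ f.Fplus e j θ) ∧
  (∀ e θ, θ ∈ Set.Ico (0:ℝ) (H - τ e) →
      ∑ j, f.fout e j (θ + τ e) =
        if 0 < f.queue e θ then ν e else min (∑ j, f.fin e j θ) (ν e)) ∧
  (∀ e j θ, θ ∈ Set.Ico (0:ℝ) H → ∀ φ : ℝ,
      IsGreatest {ϑ : ℝ | ϑ ∈ Set.Ico (0:ℝ) H ∧ f.exitTime e ϑ = θ} φ →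
      f.fout e j θ =
        if 0 < ∑ j', f.fin e j' φ
        then (f.fin e j φ / ∑ j', f.fin e j' φ) * ∑ j', f.fout e j' θ
        else 0)

/-- Payoff of player `j`: the amount `∑_e F⁻_{e,j}(H)` of her flow arriving at `t`
before time `H`. -/
noncomputable def payoff (f : FlowOverTime E P τ ν d H) (j : P) : ℝ :=
  ∑ e, f.Fminus e j H

end FlowOverTime

open Classical in
/-- The set of active edges `E'(T) = {e ∈ E : T_e < H}` for a vector of exit times `T`. -/
noncomputable def activeEdges {E : Type} [Fintype E] (H : ℝ) (T : E → ℝ) : Finset E :=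
  Finset.univ.filter (fun e => T e < H)

open Classical in
/-- The strategy `ḡ`: route proportionally to the capacities of the active edges, and
proportionally to all capacities if no edge is active. -/
noncomputable def gbar {E : Type} [Fintype E] (ν : E → ℝ) (H : ℝ)
    (T : E → ℝ) (e : E) : ℝ :=
  if e ∈ activeEdges H T then ν e / ∑ e' ∈ activeEdges H T, ν e'
  else if (activeEdges H T).Nonempty then 0
  else ν e / ∑ e', ν e'

/-- A function of an information state `(θ, T)` is right-Lipschitz if around every point
it is Lipschitz with respect to coordinate-wise nonnegative small perturbations. -/
def RightLipschitz {E : Type} [Fintype E] (g : ℝ → (E → ℝ) → ℝ) : Prop :=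
  ∀ (θ : ℝ) (T : E → ℝ), ∃ L > (0:ℝ), ∃ ε > (0:ℝ), ∀ (δ : ℝ) (x : E → ℝ),
    δ ∈ Set.Icc (0:ℝ) ε → (∀ e, x e ∈ Set.Icc (0:ℝ) ε) →
    |g θ T - g (θ + δ) (fun e => T e + x e)| ≤ L * ‖(δ, x)‖

/-- An admissible strategy with information on exit times: a right-Lipschitz function
`g : [0, H) × ℝ≥0^E → [0, 1]^E` whose components sum to `1`. -/
def Admissible {E : Type} [Fintype E] (g : ℝ → (E → ℝ) → E → ℝ) : Prop :=
  (∀ e, RightLipschitz (fun θ T => g θ T e)) ∧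
  (∀ θ T e, g θ T e ∈ Set.Icc (0:ℝ) 1) ∧
  (∀ θ T, ∑ e, g θ T e = 1)

/-- The feasible flow over time induced by a strategy profile `G` with information on
exit times: player `j` sends flow into edge `e` at rate
`f⁺_{e,j}(θ) = d_j · g_{e,j}(θ, T(θ))` where `T(θ)` is the current exit-time vector. -/
def FlowOverTime.InducedBy {E P : Type} [Fintype E] [Fintype P]
    {τ ν : E → ℝ} {d : P → ℝ} {H : ℝ}
    (f : FlowOverTime E P τ ν d H) (G : P → ℝ → (E → ℝ) → E → ℝ) : Prop :=
  f.Feasible ∧ ∀ e j θ, θ ∈ Set.Ico (0:ℝ) H →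
    f.fin e j θ = d j * G j θ (fun e' => f.exitTime e' θ) e

open Set intervalIntegral

theorem ContinuousOn.nonpos_of_no_rise_while_pos {q : ℝ → ℝ} {a b : ℝ} (hab : a ≤ b)
    (hq : ContinuousOn q (Icc a b)) (ha : q a ≤ 0)
    (hno_rise : ∀ w ∈ Ico a b, (∀ s ∈ Ioo w b, 0 < q s) → q b ≤ q w) : q b ≤ 0 := by
  by_contra! hb
  have hcompact : IsCompact (Icc a b ∩ q ⁻¹' Iic 0) :=
    isCompact_Icc.of_isClosed_subset (hq.preimage_isClosed_of_isClosed isClosed_Icc isClosed_Iic)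
      inter_subset_left
  obtain ⟨w, ⟨hw, hqw⟩, hmax⟩ := hcompact.exists_isGreatest ⟨a, left_mem_Icc.2 hab, ha⟩
  have hwb : w < b := hw.2.lt_of_ne fun h => by subst h; exact (lt_irrefl 0) (hb.trans_le hqw)
  have hpos : ∀ s ∈ Ioo w b, 0 < q s := fun s hs => by
    by_contra! hs'
    exact hs.1.not_ge (hmax ⟨⟨hw.1.trans hs.1.le, hs.2.le⟩, hs'⟩)
  linarith [hno_rise w ⟨hw.1, hwb⟩ hpos, show q w ≤ 0 from hqw]

theorem mem_activeEdges {E : Type} [Fintype E] {H : ℝ} {T : E → ℝ} {e : E} :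
    e ∈ activeEdges H T ↔ T e < H := by
  simp [activeEdges]

theorem gbar_eq_zero {E : Type} [Fintype E] {ν : E → ℝ} {H : ℝ} {T : E → ℝ} {e : E}
    (hne : (activeEdges H T).Nonempty) (he : H ≤ T e) : gbar ν H T e = 0 := by
  rw [gbar, if_neg (mt mem_activeEdges.1 he.not_gt), if_pos hne]

def cutCapacity {E : Type} [Fintype E] (τ ν : E → ℝ) (D H t : ℝ) : ℝ :=
  D * t + ∑ e, ν e * max (H - t - τ e) 0

namespace FlowOverTime

variable {E P : Type} [Fintype E] [Fintype P] {τ ν : E → ℝ} {d : P → ℝ} {H : ℝ}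
  (f : FlowOverTime E P τ ν d H)

noncomputable def inRate (e : E) (θ : ℝ) : ℝ := ∑ j, f.fin e j θ

noncomputable def outRate (e : E) (σ : ℝ) : ℝ := ∑ j, f.fout e j σ

noncomputable def cumIn (e : E) (θ : ℝ) : ℝ := ∑ j, f.Fplus e j θ

noncomputable def cumOut (e : E) (σ : ℝ) : ℝ := ∑ j, f.Fminus e j σ

theorem inRate_nonneg (e : E) (θ : ℝ) : 0 ≤ f.inRate e θ :=
  Finset.sum_nonneg fun j _ => f.fin_nonneg e j θ

theorem inRate_eq_zero (e : E) {θ : ℝ} (hθ : θ ∉ Ico 0 H) : f.inRate e θ = 0 :=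
  Finset.sum_eq_zero fun j _ => f.fin_supp e j θ hθ

theorem outRate_eq_zero (e : E) {σ : ℝ} (hσ : σ ∉ Ico (τ e) H) : f.outRate e σ = 0 :=
  Finset.sum_eq_zero fun j _ => f.fout_supp e j σ hσ

theorem integrable_inRate (e : E) : Integrable (f.inRate e) :=
  integrable_finsetSum _ fun j _ => f.fin_integrable e j

theorem integrable_outRate (e : E) : Integrable (f.outRate e) :=
  integrable_finsetSum _ fun j _ => f.fout_integrable e j

theorem cumIn_eq_integral (e : E) (θ : ℝ) : f.cumIn e θ = ∫ t in 0..θ, f.inRate e t :=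
  (integral_finsetSum fun j _ => (f.fin_integrable e j).intervalIntegrable).symm

theorem cumOut_eq_integral (e : E) (σ : ℝ) : f.cumOut e σ = ∫ t in 0..σ, f.outRate e t :=
  (integral_finsetSum fun j _ => (f.fout_integrable e j).intervalIntegrable).symm

theorem cumIn_sub (e : E) (x y : ℝ) : f.cumIn e y - f.cumIn e x = ∫ t in x..y, f.inRate e t := by
  rw [cumIn_eq_integral, cumIn_eq_integral, integral_interval_sub_left
    (f.integrable_inRate e).intervalIntegrable (f.integrable_inRate e).intervalIntegrable]

theorem cumOut_sub (e : E) (x y : ℝ) :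
    f.cumOut e y - f.cumOut e x = ∫ t in x..y, f.outRate e t := by
  rw [cumOut_eq_integral, cumOut_eq_integral, integral_interval_sub_left
    (f.integrable_outRate e).intervalIntegrable (f.integrable_outRate e).intervalIntegrable]

theorem continuous_cumIn (e : E) : Continuous (f.cumIn e) := by
  rw [funext (f.cumIn_eq_integral e)]
  exact continuous_primitive (fun _ _ => (f.integrable_inRate e).intervalIntegrable) 0

theorem continuous_cumOut (e : E) : Continuous (f.cumOut e) := by
  rw [funext (f.cumOut_eq_integral e)]
  exact continuous_primitive (fun _ _ => (f.integrable_outRate e).intervalIntegrable) 0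

theorem monotone_cumIn (e : E) : Monotone (f.cumIn e) := fun x y hxy =>
  sub_nonneg.1 <| f.cumIn_sub e x y ▸ integral_nonneg hxy fun t _ => f.inRate_nonneg e t

theorem cumIn_eq_zero_of_nonpos (e : E) {θ : ℝ} (hθ : θ ≤ 0) : f.cumIn e θ = 0 := by
  rw [cumIn_eq_integral, integral_congr_uIoo (g := 0) fun t ht =>
    f.inRate_eq_zero e fun ht' => (ht.2.trans_le (max_le le_rfl hθ)).not_ge ht'.1]
  simp

theorem cumOut_eq_zero_of_le (e : E) (hτ : 0 ≤ τ e) {σ : ℝ} (hσ : σ ≤ τ e) :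
    f.cumOut e σ = 0 := by
  rw [cumOut_eq_integral, integral_congr_uIoo (g := 0) fun t ht =>
    f.outRate_eq_zero e fun ht' => (ht.2.trans_le (max_le hτ hσ)).not_ge ht'.1]
  simp

theorem cumOut_eq_cumOut_horizon (e : E) {σ : ℝ} (hσ : H ≤ σ) :
    f.cumOut e σ = f.cumOut e H := by
  have h := f.cumOut_sub e H σ
  rw [integral_congr_Ioo_of_le hσ (g := 0) fun t ht => f.outRate_eq_zero e fun ht' =>
    ht.1.not_ge ht'.2.le] at h
  simpa [sub_eq_zero] using h

theorem queue_eq (e : E) (θ : ℝ) : f.queue e θ = f.cumIn e θ - f.cumOut e (θ + τ e) := rfl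

theorem queue_sub (e : E) (x y : ℝ) : f.queue e y - f.queue e x =
    (∫ s in x..y, f.inRate e s) - ∫ s in x..y, f.outRate e (s + τ e) := by
  rw [integral_comp_add_right, ← f.cumIn_sub, ← f.cumOut_sub, queue_eq, queue_eq]
  ring

theorem continuous_queue (e : E) : Continuous (f.queue e) :=
  (f.continuous_cumIn e).sub ((f.continuous_cumOut e).comp (continuous_add_const (τ e)))

theorem continuous_exitTime (e : E) : Continuous (f.exitTime e) :=
  (continuous_id.add ((f.continuous_queue e).div_const _)).add continuous_const

theorem queue_eq_zero_of_nonpos (e : E) (hτ : 0 ≤ τ e) {θ : ℝ} (hθ : θ ≤ 0) :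
    f.queue e θ = 0 := by
  rw [queue_eq, f.cumIn_eq_zero_of_nonpos e hθ, f.cumOut_eq_zero_of_le e hτ (by linarith),
    sub_zero]

theorem exitTime_zero (e : E) (hτ : 0 ≤ τ e) : f.exitTime e 0 = τ e := by
  rw [exitTime, f.queue_eq_zero_of_nonpos e hτ le_rfl, zero_div, zero_add, zero_add]

theorem sum_payoff_eq_sum_cumOut : ∑ j, f.payoff j = ∑ e, f.cumOut e H :=
  Finset.sum_comm

theorem sum_cumIn_eq {t : ℝ} (ht : t ∈ Icc 0 H) : ∑ e, f.cumIn e t = (∑ j, d j) * t := by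
  rw [Finset.sum_congr rfl fun e _ => f.cumIn_eq_integral e t,
    ← integral_finsetSum fun e _ => (f.integrable_inRate e).intervalIntegrable,
    integral_congr_Ioo_of_le ht.1 (g := fun _ => ∑ j, d j) fun s hs => ?_,
    intervalIntegral.integral_const, smul_eq_mul, sub_zero, mul_comm]
  simp only [inRate]
  rw [Finset.sum_comm]
  exact Finset.sum_congr rfl fun j _ => f.conservation j s ⟨hs.1.le, hs.2.trans_le ht.2⟩

theorem outRate_le_capacity (hf : f.Feasible) (e : E) (hν : 0 ≤ ν e) (σ : ℝ) :
    f.outRate e σ ≤ ν e := by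
  by_cases hσ : σ ∈ Ico (τ e) H
  · have h := hf.2.1 e (σ - τ e) ⟨by linarith [hσ.1], by linarith [hσ.2]⟩
    rw [sub_add_cancel] at h
    rw [outRate, h]
    split_ifs
    exacts [le_rfl, min_le_right _ _]
  · rw [f.outRate_eq_zero e hσ]
    exact hν

theorem cumOut_sub_le (hf : f.Feasible) (e : E) (hν : 0 ≤ ν e) {a b : ℝ} (hab : a ≤ b) :
    f.cumOut e b - f.cumOut e a ≤ ν e * (b - a) := by
  rw [cumOut_sub, mul_comm, ← smul_eq_mul, ← intervalIntegral.integral_const]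
  exact integral_mono_on hab (f.integrable_outRate e).intervalIntegrable
    intervalIntegrable_const fun σ _ => f.outRate_le_capacity hf e hν σ

theorem cumOut_le_cumIn (hf : f.Feasible) (e : E) (hτ : 0 ≤ τ e) (θ : ℝ) :
    f.cumOut e (θ + τ e) ≤ f.cumIn e θ := by
  -- non-deficit is only imposed for `θ < H - τ e`; continuity extends it to `θ = H - τ e`,
  -- after which the cumulative outflow is frozen
  have hclosed : IsClosed {θ | f.cumOut e (θ + τ e) ≤ f.cumIn e θ} :=
    isClosed_le ((f.continuous_cumOut e).comp (continuous_add_const (τ e))) (f.continuous_cumIn e)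
  have hbefore : Iio (H - τ e) ⊆ {θ | f.cumOut e (θ + τ e) ≤ f.cumIn e θ} := fun θ hθ => by
    rcases lt_or_ge θ 0 with h0 | h0
    · change f.cumOut e (θ + τ e) ≤ f.cumIn e θ
      rw [f.cumOut_eq_zero_of_le e hτ (by linarith),
        f.cumIn_eq_zero_of_nonpos e h0.le]
    · exact Finset.sum_le_sum fun j _ => hf.1 e j θ ⟨h0, hθ⟩
  have hupto := hclosed.closure_subset_iff.2 hbefore
  rw [closure_Iio] at hupto
  rcases le_or_gt θ (H - τ e) with hθ | hθ
  · exact hupto hθ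
  · calc f.cumOut e (θ + τ e) = f.cumOut e (H - τ e + τ e) := by
          rw [sub_add_cancel, f.cumOut_eq_cumOut_horizon e (by linarith)]
      _ ≤ f.cumIn e (H - τ e) := hupto self_mem_Iic
      _ ≤ f.cumIn e θ := f.monotone_cumIn e hθ.le

theorem queue_nonneg (hf : f.Feasible) (e : E) (hτ : 0 ≤ τ e) (θ : ℝ) : 0 ≤ f.queue e θ :=
  sub_nonneg.2 (f.cumOut_le_cumIn hf e hτ θ)

theorem le_exitTime (hf : f.Feasible) (e : E) (hτ : 0 ≤ τ e) (hν : 0 < ν e) (θ : ℝ) :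
    θ + τ e ≤ f.exitTime e θ := by
  have := div_nonneg (f.queue_nonneg hf e hτ θ) hν.le
  rw [exitTime]
  linarith

theorem monotone_exitTime (hf : f.Feasible) (e : E) (hν : 0 < ν e) :
    Monotone (f.exitTime e) := by
  intro x y hxy
  have hin := f.monotone_cumIn e hxy
  have hout := f.cumOut_sub_le hf e hν.le (by linarith : x + τ e ≤ y + τ e)
  have hdrain : -(y - x) ≤ f.queue e y / ν e - f.queue e x / ν e := by
    rw [← sub_div, le_div_iff₀ hν, queue_eq, queue_eq]
    linarith
  rw [exitTime, exitTime]
  linarith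

theorem exists_isGreatest_exitTime_eq (hf : f.Feasible) (e : E) (hτ : 0 ≤ τ e) (hν : 0 < ν e)
    {σ : ℝ} (hσ : σ ∈ Ico (τ e) H) :
    ∃ φ, IsGreatest {ϑ | ϑ ∈ Ico 0 H ∧ f.exitTime e ϑ = σ} φ := by
  have hpre : {ϑ | ϑ ∈ Ico 0 H ∧ f.exitTime e ϑ = σ} =
      Icc 0 (σ - τ e) ∩ f.exitTime e ⁻¹' {σ} := by
    ext ϑ
    constructor
    · rintro ⟨hϑ, hT⟩
      exact ⟨⟨hϑ.1, by linarith [f.le_exitTime hf e hτ hν ϑ]⟩, hT⟩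
    · rintro ⟨hϑ, hT⟩
      exact ⟨⟨hϑ.1, by linarith [hϑ.2, hσ.2]⟩, hT⟩
  have hcont := f.continuous_exitTime e
  obtain ⟨ϑ, hϑ, hT⟩ : σ ∈ f.exitTime e '' Icc 0 (σ - τ e) :=
    intermediate_value_Icc (by linarith [hσ.1]) hcont.continuousOn
      ⟨(f.exitTime_zero e hτ).trans_le hσ.1, by linarith [f.le_exitTime hf e hτ hν (σ - τ e)]⟩
  rw [hpre]
  exact (isCompact_Icc.inter_right (isClosed_singleton.preimage hcont)).exists_isGreatest
    ⟨ϑ, hϑ, hT⟩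

theorem cumOut_horizon_le (hf : f.Feasible) (e : E) (hτ : 0 ≤ τ e) (hν : 0 ≤ ν e) (t : ℝ) :
    f.cumOut e H ≤ f.cumIn e t + ν e * max (H - t - τ e) 0 := by
  have hcap : f.cumOut e H ≤ f.cumOut e (t + τ e) + ν e * max (H - t - τ e) 0 := by
    rcases le_or_gt (t + τ e) H with h | h
    · rw [max_eq_left (by linarith)]
      linarith [f.cumOut_sub_le hf e hν h]
    · rw [max_eq_right (by linarith), mul_zero, add_zero,
        f.cumOut_eq_cumOut_horizon e h.le]
  linarith [f.cumOut_le_cumIn hf e hτ t]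

theorem sum_payoff_le_cutCapacity (hf : f.Feasible) (hτ : ∀ e, 0 ≤ τ e) (hν : ∀ e, 0 ≤ ν e)
    {t : ℝ} (ht : t ∈ Icc 0 H) : ∑ j, f.payoff j ≤ cutCapacity τ ν (∑ j, d j) H t := by
  rw [sum_payoff_eq_sum_cumOut, cutCapacity, ← f.sum_cumIn_eq ht, ← Finset.sum_add_distrib]
  exact Finset.sum_le_sum fun e _ => f.cumOut_horizon_le hf e (hτ e) (hν e) t

theorem inRate_eq_of_inducedBy {g : ℝ → (E → ℝ) → E → ℝ} (hf : f.InducedBy fun _ => g) (e : E)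
    {θ : ℝ} (hθ : θ ∈ Ico 0 H) :
    f.inRate e θ = (∑ j, d j) * g θ (fun e' => f.exitTime e' θ) e := by
  rw [inRate, Finset.sum_mul]
  exact Finset.sum_congr rfl fun j _ => hf.2 e j θ hθ

theorem fout_eq_share {g : ℝ → (E → ℝ) → E → ℝ} (hf : f.InducedBy fun _ => g)
    (hτ : ∀ e, 0 ≤ τ e) (hν : ∀ e, 0 < ν e) (e : E) (j : P) (σ : ℝ) :
    f.fout e j σ = d j / (∑ j', d j') * f.outRate e σ := by
  by_cases hσ : σ ∈ Ico (τ e) H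
  · obtain ⟨φ, hφ⟩ := f.exists_isGreatest_exitTime_eq hf.1 e (hτ e) (hν e) hσ
    have hmerge : ∀ j', _ := fun j' => hf.1.2.2 e j' σ ⟨(hτ e).trans hσ.1, hσ.2⟩ φ hφ
    set G := g φ (fun e' => f.exitTime e' φ) e
    have hin : ∀ j', f.fin e j' φ = d j' * G := fun j' => hf.2 e j' φ hφ.1.1
    have hsum : ∑ j', f.fin e j' φ = (∑ j', d j') * G := by
      simp only [hin, Finset.sum_mul]
    by_cases hpos : 0 < ∑ j', f.fin e j' φ
    · have hG : G ≠ 0 := by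
        rintro hG
        rw [hsum, hG, mul_zero] at hpos
        exact lt_irrefl 0 hpos
      rw [hmerge j, if_pos hpos, hin, hsum, mul_div_mul_right _ _ hG]
      rfl
    · have hzero : ∀ j', f.fout e j' σ = 0 := fun j' => by rw [hmerge j', if_neg hpos]
      rw [hzero, outRate, Finset.sum_eq_zero fun j' _ => hzero j', mul_zero]
  · rw [f.fout_supp e j σ hσ, f.outRate_eq_zero e hσ, mul_zero]

theorem payoff_eq_share {g : ℝ → (E → ℝ) → E → ℝ} (hf : f.InducedBy fun _ => g)
    (hτ : ∀ e, 0 ≤ τ e) (hν : ∀ e, 0 < ν e) (j : P) :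
    f.payoff j = d j / (∑ j', d j') * ∑ j', f.payoff j' := by
  rw [sum_payoff_eq_sum_cumOut, payoff, Finset.mul_sum]
  refine Finset.sum_congr rfl fun e _ => ?_
  rw [Fminus, cumOut_eq_integral, ← intervalIntegral.integral_const_mul]
  exact integral_congr fun σ _ => f.fout_eq_share hf hτ hν e j σ

theorem mem_activeEdges_exitTime {e : E} {θ : ℝ} :
    e ∈ activeEdges H (fun e' => f.exitTime e' θ) ↔ f.exitTime e θ < H :=
  mem_activeEdges

noncomputable def activeCapacity (θ : ℝ) : ℝ :=
  ∑ e ∈ activeEdges H (fun e' => f.exitTime e' θ), ν e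

noncomputable def congestionOnset : ℝ :=
  sInf {θ | 0 ≤ θ ∧ f.activeCapacity θ < ∑ j, d j}

theorem antitone_activeCapacity (hf : f.Feasible) (hν : ∀ e, 0 < ν e) :
    Antitone f.activeCapacity := by
  intro x y hxy
  refine Finset.sum_le_sum_of_subset_of_nonneg (fun e he => ?_) fun e _ _ => (hν e).le
  rw [mem_activeEdges_exitTime] at he ⊢
  exact (f.monotone_exitTime hf e (hν e) hxy).trans_lt he

theorem activeCapacity_horizon (hf : f.Feasible) (hτ : ∀ e, 0 ≤ τ e) (hν : ∀ e, 0 < ν e) :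
    f.activeCapacity H = 0 :=
  Finset.sum_eq_zero fun e he => absurd (mem_activeEdges.1 he)
    (not_lt.2 (by linarith [f.le_exitTime hf e (hτ e) (hν e) H, hτ e]))

theorem congestionOnset_mem_Icc (hf : f.Feasible) (hτ : ∀ e, 0 ≤ τ e) (hν : ∀ e, 0 < ν e)
    (hD : 0 < ∑ j, d j) (hH : 0 ≤ H) : f.congestionOnset ∈ Icc 0 H := by
  have hmem : H ∈ {θ | 0 ≤ θ ∧ f.activeCapacity θ < ∑ j, d j} :=
    ⟨hH, (f.activeCapacity_horizon hf hτ hν).trans_lt hD⟩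
  exact ⟨le_csInf ⟨H, hmem⟩ fun _ h => h.1, csInf_le ⟨0, fun _ h => h.1⟩ hmem⟩

theorem le_activeCapacity_of_lt_congestionOnset {θ : ℝ} (h0 : 0 ≤ θ)
    (h : θ < f.congestionOnset) : ∑ j, d j ≤ f.activeCapacity θ :=
  not_lt.1 fun hlt => h.not_ge (csInf_le ⟨0, fun _ h => h.1⟩ ⟨h0, hlt⟩)

theorem activeCapacity_lt_of_congestionOnset_lt (hf : f.Feasible) (hτ : ∀ e, 0 ≤ τ e)
    (hν : ∀ e, 0 < ν e) (hD : 0 < ∑ j, d j) (hH : 0 ≤ H) {θ : ℝ}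
    (h : f.congestionOnset < θ) : f.activeCapacity θ < ∑ j, d j := by
  obtain ⟨u, hu, huθ⟩ := exists_lt_of_csInf_lt (s := {θ | 0 ≤ θ ∧ f.activeCapacity θ < ∑ j, d j})
    ⟨H, hH, (f.activeCapacity_horizon hf hτ hν).trans_lt hD⟩ h
  exact (f.antitone_activeCapacity hf hν huθ.le).trans_lt hu.2

theorem activeEdges_nonempty_of_lt_congestionOnset (hD : 0 < ∑ j, d j) {θ : ℝ} (h0 : 0 ≤ θ)
    (h : θ < f.congestionOnset) : (activeEdges H fun e => f.exitTime e θ).Nonempty :=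
  Finset.nonempty_of_sum_ne_zero (hD.trans_le (f.le_activeCapacity_of_lt_congestionOnset h0 h)).ne'

section InducedByGbar

variable (hf : f.InducedBy fun _ _ T e => gbar ν H T e) (hτ : ∀ e, 0 ≤ τ e)
  (hν : ∀ e, 0 < ν e) (hD : 0 < ∑ j, d j) (hH : 0 ≤ H)
include hf hτ hν hD hH

theorem inRate_le_capacity_of_lt_congestionOnset (e : E) {θ : ℝ} (h0 : 0 ≤ θ)
    (h : θ < f.congestionOnset) : f.inRate e θ ≤ ν e := by
  have hθH : θ < H := h.trans_le (f.congestionOnset_mem_Icc hf.1 hτ hν hD hH).2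
  have hcap := f.le_activeCapacity_of_lt_congestionOnset h0 h
  rw [f.inRate_eq_of_inducedBy hf e ⟨h0, hθH⟩]
  by_cases he : f.exitTime e θ < H
  · rw [gbar, if_pos (f.mem_activeEdges_exitTime.2 he), mul_div_left_comm]
    exact mul_le_of_le_one_right (hν e).le ((div_le_one (hD.trans_le hcap)).2 hcap)
  · rw [gbar_eq_zero (f.activeEdges_nonempty_of_lt_congestionOnset hD h0 h) (not_lt.1 he),
      mul_zero]
    exact (hν e).le

theorem inRate_eq_zero_of_lt_congestionOnset (e : E) {θ : ℝ}
    (h : θ < f.congestionOnset) (he : H ≤ f.exitTime e θ) : f.inRate e θ = 0 := by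
  by_cases h0 : 0 ≤ θ
  · have hθH : θ < H := h.trans_le (f.congestionOnset_mem_Icc hf.1 hτ hν hD hH).2
    rw [f.inRate_eq_of_inducedBy hf e ⟨h0, hθH⟩,
      gbar_eq_zero (f.activeEdges_nonempty_of_lt_congestionOnset hD h0 h) he, mul_zero]
  · exact f.inRate_eq_zero e fun hθ => h0 hθ.1

theorem capacity_le_inRate_of_congestionOnset_lt (e : E) {θ : ℝ}
    (h : f.congestionOnset < θ) (he : f.exitTime e θ < H) : ν e ≤ f.inRate e θ := by
  have h0 : 0 ≤ θ := (f.congestionOnset_mem_Icc hf.1 hτ hν hD hH).1.trans h.le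
  have hθH : θ < H := by linarith [f.le_exitTime hf.1 e (hτ e) (hν e) θ, hτ e]
  have hcap := f.activeCapacity_lt_of_congestionOnset_lt hf.1 hτ hν hD hH h
  have hactive := f.mem_activeEdges_exitTime.2 he
  have hcap_pos : 0 < f.activeCapacity θ :=
    (hν e).trans_le (Finset.single_le_sum (fun e' _ => (hν e').le) hactive)
  rw [f.inRate_eq_of_inducedBy hf e ⟨h0, hθH⟩, gbar, if_pos hactive, mul_div_left_comm]
  exact le_mul_of_one_le_right (hν e).le ((one_le_div hcap_pos).2 hcap.le)

theorem queue_eq_zero_of_le_congestionOnset (e : E) {θ : ℝ}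
    (h : θ ≤ f.congestionOnset) (hθ : θ ≤ H - τ e) : f.queue e θ = 0 := by
  rcases le_or_gt θ 0 with h0 | h0
  · exact f.queue_eq_zero_of_nonpos e (hτ e) h0
  refine le_antisymm ?_ (f.queue_nonneg hf.1 e (hτ e) θ)
  refine (f.continuous_queue e).continuousOn.nonpos_of_no_rise_while_pos h0.le
    (f.queue_eq_zero_of_nonpos e (hτ e) le_rfl).le fun w hw hpos => ?_
  have hout : ∫ s in w..θ, f.outRate e (s + τ e) = ∫ _ in w..θ, ν e :=
    integral_congr_Ioo_of_le hw.2.le fun s hs => by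
      have hq := hf.1.2.1 e s ⟨hw.1.trans hs.1.le, hs.2.trans_le hθ⟩
      rwa [if_pos (hpos s hs)] at hq
  have hin : ∫ s in w..θ, f.inRate e s ≤ ∫ _ in w..θ, ν e :=
    integral_mono_on_of_le_Ioo hw.2.le (f.integrable_inRate e).intervalIntegrable
      intervalIntegrable_const fun s hs => f.inRate_le_capacity_of_lt_congestionOnset hf hτ hν
        hD hH e (hw.1.trans hs.1.le) (hs.2.trans_le h)
  linarith [f.queue_sub e w θ]

theorem outRate_eq_capacity_of_congestionOnset_lt (e : E) {θ : ℝ}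
    (h : f.congestionOnset < θ) (hθ : θ < H - τ e) : f.outRate e (θ + τ e) = ν e := by
  have h0 : 0 ≤ θ := (f.congestionOnset_mem_Icc hf.1 hτ hν hD hH).1.trans h.le
  have hq := hf.1.2.1 e θ ⟨h0, hθ⟩
  rcases (f.queue_nonneg hf.1 e (hτ e) θ).lt_or_eq with hpos | hzero
  · rwa [if_pos hpos] at hq
  · -- with an empty queue the edge is active, so `ḡ` feeds it at least at capacity
    have he : f.exitTime e θ < H := by
      rw [exitTime, ← hzero, zero_div, add_zero]
      linarith
    rw [outRate, hq, if_neg hzero.symm.not_gt]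
    exact min_eq_right (f.capacity_le_inRate_of_congestionOnset_lt hf hτ hν hD hH e h he)

theorem cumOut_horizon_eq (e : E) :
    f.cumOut e H = f.cumIn e f.congestionOnset + ν e * max (H - f.congestionOnset - τ e) 0 := by
  set t := f.congestionOnset
  rcases le_or_gt t (H - τ e) with ht | ht
  · have hq := f.queue_eq_zero_of_le_congestionOnset hf hτ hν hD hH e le_rfl ht
    have hsat : ∫ s in t..H - τ e, f.outRate e (s + τ e) = ∫ _ in t..H - τ e, ν e :=
      integral_congr_Ioo_of_le ht fun s hs =>
        f.outRate_eq_capacity_of_congestionOnset_lt hf hτ hν hD hH e hs.1 hs.2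
    rw [integral_comp_add_right, sub_add_cancel, ← cumOut_sub, intervalIntegral.integral_const,
      smul_eq_mul] at hsat
    rw [queue_eq] at hq
    rw [max_eq_left (by linarith)]
    linarith
  · have hq := f.queue_eq_zero_of_le_congestionOnset hf hτ hν hD hH e ht.le le_rfl
    have hidle : ∫ s in H - τ e..t, f.inRate e s = ∫ _ in H - τ e..t, (0 : ℝ) :=
      integral_congr_Ioo_of_le ht.le fun s hs =>
        f.inRate_eq_zero_of_lt_congestionOnset hf hτ hν hD hH e hs.2
          (by linarith [hs.1, f.le_exitTime hf.1 e (hτ e) (hν e) s])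
    rw [← cumIn_sub, intervalIntegral.integral_zero] at hidle
    rw [queue_eq, sub_add_cancel] at hq
    rw [max_eq_right (by linarith), mul_zero, add_zero]
    linarith

theorem sum_payoff_eq_cutCapacity :
    ∑ j, f.payoff j = cutCapacity τ ν (∑ j, d j) H f.congestionOnset := by
  rw [sum_payoff_eq_sum_cumOut, Finset.sum_congr rfl fun e _ =>
      f.cumOut_horizon_eq hf hτ hν hD hH e, Finset.sum_add_distrib,
    f.sum_cumIn_eq (f.congestionOnset_mem_Icc hf.1 hτ hν hD hH), cutCapacity]

end InducedByGbar

end FlowOverTime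

theorem gbar_payoff_proportional_share_general
    {E P : Type} [Fintype E] [Fintype P]
    (τ ν : E → ℝ) (d : P → ℝ) (H : ℝ)
    (hτ : ∀ e, 0 < τ e) (hν : ∀ e, 0 < ν e) (hd : ∀ j, 0 < d j) (hH : 0 < H)
    (Opt : ℝ)
    (hOpt : IsGreatest {v : ℝ | ∃ f : FlowOverTime E P τ ν d H,
        f.Feasible ∧ ∑ j, f.payoff j = v} Opt)
    (f : FlowOverTime E P τ ν d H)
    (hf : f.InducedBy (fun _ θ T e => gbar ν H T e)) :
    ∀ j, f.payoff j = Opt * d j / ∑ j', d j' := by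
  intro j
  have hτ₀ : ∀ e, 0 ≤ τ e := fun e => (hτ e).le
  have hD : 0 < ∑ j', d j' := Finset.sum_pos (fun j' _ => hd j') ⟨j, Finset.mem_univ j⟩
  have hOpt_eq : Opt = ∑ j', f.payoff j' := by
    obtain ⟨f₀, hf₀, rfl⟩ := hOpt.1
    refine le_antisymm ?_ (hOpt.2 ⟨f, hf.1, rfl⟩)
    rw [f.sum_payoff_eq_cutCapacity hf hτ₀ hν hD hH.le]
    exact f₀.sum_payoff_le_cutCapacity hf₀ hτ₀ (fun e => (hν e).le)
      (f.congestionOnset_mem_Icc hf.1 hτ₀ hν hD hH.le)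
  rw [f.payoff_eq_share hf hτ₀ hν, ← hOpt_eq]
  ring

/-- On a parallel-edge network where the players receive the current
time and exit times as information, if every player uses the strategy `ḡ` (routing
proportionally to the capacities of the active edges), then in the induced feasible flow
over time every player's payoff is her proportional share of the system optimum:
`ρ_j = Opt · d_j / ∑_{j'} d_{j'}`. -/
theorem gbar_payoff_proportional_share
    {E P : Type} [Fintype E] [Fintype P] [Nonempty E]
    (τ ν : E → ℝ) (d : P → ℝ) (H : ℝ)
    (hτ : ∀ e, 0 < τ e) (hν : ∀ e, 0 < ν e) (hd : ∀ j, 0 < d j) (hH : 0 < H)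
    (Opt : ℝ)
    (hOpt : IsGreatest {v : ℝ | ∃ f : FlowOverTime E P τ ν d H,
        f.Feasible ∧ ∑ j, f.payoff j = v} Opt)
    (f : FlowOverTime E P τ ν d H)
    (hf : f.InducedBy (fun _ θ T e => gbar ν H T e)) :
    ∀ j, f.payoff j = Opt * d j / ∑ j', d j' :=
  gbar_payoff_proportional_share_general τ ν d H hτ hν hd hH Opt hOpt f hf
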